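/- arXiv:1603.05010 — 2 statements merged into one kernel-verified Lean document; each statement's English description precedes it below -/
import Mathlib

section
/- For an antisymmetric tensor A of order d, the maximum of |A ×_1 v_1ᵀ ⋯ ×_d v_dᵀ| over unit vectors v_1,…,v_d equals the maximum of |A ×_1 u_1ᵀ ⋯ ×_d u_dᵀ| over orthonormal families u_1,…,u_d (assuming d ≤ n so orthonormal families exist). -/
/-! By Gram–Schmidt, unit vectors `v₁, …, v_d` can be written as `v_m = ∑_{k ≤ m} R m k • u_k`
with `u` orthonormal and `R` lower triangular. For antisymmetric `A` the contraction is an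
alternating form, so `contr A v = det R * contr A u`, and `|det R| = ∏ |⟪u_m, v_m⟫| ≤ 1` by
Cauchy–Schwarz. So each value over unit vectors is dominated by one over orthonormal families,
which are themselves unit vectors. -/

def IsAntisym {n d : ℕ} (A : (Fin d → Fin n) → ℝ) : Prop :=
  ∀ (π : Equiv.Perm (Fin d)) (i : Fin d → Fin n),
    A (i ∘ π) = ((Equiv.Perm.sign π : ℤ) : ℝ) * A i

def contr {n d : ℕ} (A : (Fin d → Fin n) → ℝ) (v : Fin d → Fin n → ℝ) : ℝ :=
  ∑ i : Fin d → Fin n, A i * ∏ m : Fin d, v m (i m)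

section
variable {n d : ℕ} {A : (Fin d → Fin n) → ℝ}

theorem contr_comp_perm (hA : IsAntisym A) (π : Equiv.Perm (Fin d)) (w : Fin d → Fin n → ℝ) :
    contr A (w ∘ π) = ((Equiv.Perm.sign π : ℤ) : ℝ) * contr A w := by
  rw [contr, contr, Finset.mul_sum]
  refine (Fintype.sum_equiv (π.symm.arrowCongr (Equiv.refl _)) _ _ fun j => ?_).symm
  change _ = A (j ∘ π) * ∏ m, w (π m) (j (π m))
  rw [hA π j, Equiv.prod_comp π fun m => w m (j m), mul_assoc]

theorem contr_eq_zero_of_eq (hA : IsAntisym A) {w : Fin d → Fin n → ℝ} {p q : Fin d}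
    (hw : w p = w q) (hpq : p ≠ q) : contr A w = 0 := by
  have h := contr_comp_perm hA (Equiv.swap p q) w
  have hswap : w ∘ Equiv.swap p q = w := funext (Equiv.apply_swap_eq_self hw)
  rw [Equiv.Perm.sign_swap hpq, hswap] at h
  push_cast at h
  linarith

variable (A) in
def contrMultilinearMap : MultilinearMap ℝ (fun _ : Fin d => Fin n → ℝ) ℝ :=
  ∑ i : Fin d → Fin n,
    A i • (MultilinearMap.mkPiAlgebra ℝ (Fin d) ℝ).compLinearMap fun m => LinearMap.proj (i m)

theorem contrMultilinearMap_apply (v : Fin d → Fin n → ℝ) :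
    contrMultilinearMap A v = contr A v := by
  simp [contrMultilinearMap, contr]

def contrAlternatingMap (hA : IsAntisym A) : (Fin n → ℝ) [⋀^Fin d]→ₗ[ℝ] ℝ where
  toMultilinearMap := contrMultilinearMap A
  map_eq_zero_of_eq' v _ _ hv hpq :=
    (contrMultilinearMap_apply v).trans (contr_eq_zero_of_eq hA hv hpq)

theorem contrAlternatingMap_apply (hA : IsAntisym A) (v : Fin d → Fin n → ℝ) :
    contrAlternatingMap hA v = contr A v :=
  contrMultilinearMap_apply v

end

theorem AlternatingMap.map_sum_smul_eq_det_mul {R M ι : Type*} [CommRing R] [AddCommGroup M]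
    [Module R M] [Fintype ι] [DecidableEq ι] (f : M [⋀^ι]→ₗ[R] R) (C : Matrix ι ι R)
    (u : ι → M) : f (fun i => ∑ j, C i j • u j) = C.det * f u := by
  have hg := (f.compLinearMap (Fintype.linearCombination R u)).eq_smul_basis_det (Pi.basisFun R ι)
  rw [Pi.basisFun_det] at hg
  calc f (fun i => ∑ j, C i j • u j) = f.compLinearMap (Fintype.linearCombination R u) C := rfl
    _ = f.compLinearMap (Fintype.linearCombination R u) (Pi.basisFun R ι) * C.det := by
        conv_lhs => rw [hg]
        rfl
    _ = C.det * f u := by simp [Fintype.linearCombination_apply, Pi.single_apply, mul_comm]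

section
variable {E : Type*} [NormedAddCommGroup E] [InnerProductSpace ℝ E] [FiniteDimensional ℝ E]
  {d : ℕ}

open InnerProductSpace in
theorem exists_orthonormal_isLowerTriangular_inner (hd : d ≤ Module.finrank ℝ E)
    (v : Fin d → E) :
    ∃ u : Fin d → E, Orthonormal ℝ u ∧ (∀ m, v m = ∑ k, inner ℝ (u k) (v m) • u k) ∧
      (Matrix.of fun m k => inner ℝ (u k) (v m)).IsLowerTriangular := by
  -- `gramSchmidtOrthonormalBasis` needs `finrank ℝ E` vectors: pad `v` with zeros
  obtain ⟨r, hr⟩ := Nat.exists_eq_add_of_le hd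
  let f : Fin (d + r) → E := Fin.append v 0
  let b := gramSchmidtOrthonormalBasis (𝕜 := ℝ) (by simp [hr]) f
  have htri {m : Fin d} {j : Fin (d + r)} (h : Fin.castAdd r m < j) :
      inner ℝ (b j) (v m) = 0 := by
    rw [← Fin.append_left v 0 m]
    exact gramSchmidtOrthonormalBasis_inv_triangular _ f h
  refine ⟨fun k => b (Fin.castAdd r k), b.orthonormal.comp _ (Fin.castAdd_injective d r), ?_, ?_⟩
  · intro m
    have hnat (j : Fin r) : inner ℝ (b (Fin.natAdd d j)) (v m) = 0 :=
      htri (Fin.lt_def.2 (by simp; omega))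
    conv_lhs => rw [← b.sum_repr' (v m), Fin.sum_univ_add]
    simp [hnat]
  · intro m k hmk
    exact htri (Fin.strictMono_castAdd r hmk)

theorem AlternatingMap.exists_orthonormal_abs_le (f : E [⋀^Fin d]→ₗ[ℝ] ℝ)
    (hd : d ≤ Module.finrank ℝ E) (v : Fin d → E) (hv : ∀ m, ‖v m‖ ≤ 1) :
    ∃ u : Fin d → E, Orthonormal ℝ u ∧ |f v| ≤ |f u| := by
  obtain ⟨u, hu, hrepr, htri⟩ := exists_orthonormal_isLowerTriangular_inner hd v
  set R : Matrix (Fin d) (Fin d) ℝ := Matrix.of fun m k => inner ℝ (u k) (v m)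
  have hfv : f v = R.det * f u := by
    rw [← f.map_sum_smul_eq_det_mul]
    exact congrArg f (funext hrepr)
  have hdet : |R.det| ≤ 1 := by
    rw [Matrix.det_of_isLowerTriangular R htri, Finset.abs_prod]
    refine Finset.prod_le_one (fun _ _ => abs_nonneg _) fun m _ => ?_
    calc |inner ℝ (u m) (v m)| ≤ ‖u m‖ * ‖v m‖ := abs_real_inner_le_norm _ _
      _ ≤ 1 := by rw [hu.1 m, one_mul]; exact hv m
  refine ⟨u, hu, ?_⟩
  rw [hfv, abs_mul]
  exact mul_le_of_le_one_left (abs_nonneg _) hdet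

end

theorem exists_orthonormal_abs_contr_le {n d : ℕ} (hdn : d ≤ n) {A : (Fin d → Fin n) → ℝ}
    (hA : IsAntisym A) (v : Fin d → Fin n → ℝ) (hv : ∀ m, ∑ i, v m i ^ 2 = 1) :
    ∃ u : Fin d → Fin n → ℝ,
      (∀ p q, ∑ i, u p i * u q i = if p = q then 1 else 0) ∧ |contr A v| ≤ |contr A u| := by
  let f := (contrAlternatingMap hA).compLinearMap (WithLp.linearEquiv 2 ℝ (Fin n → ℝ)).toLinearMap
  have hnorm (m : Fin d) : ‖WithLp.toLp 2 (v m)‖ ≤ 1 := by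
    rw [← sq_le_one_iff₀ (norm_nonneg _), EuclideanSpace.real_norm_sq_eq]
    exact (hv m).le
  obtain ⟨u, hu, hle⟩ := f.exists_orthonormal_abs_le (by simpa using hdn) _ hnorm
  refine ⟨fun k => (u k).ofLp, fun p q => ?_, ?_⟩
  · rw [← orthonormal_iff_ite.1 hu p q, EuclideanSpace.inner_eq_star_dotProduct, dotProduct]
    simp [mul_comm]
  · simpa [f, contrAlternatingMap_apply] using hle

/-- For an antisymmetric tensor of order `d ≤ n`, the supremum of
`|A ×₁ v₁ᵀ ⋯ ×_d v_dᵀ|` over unit vectors equals the supremum over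
orthonormal families. -/
theorem antisym_sup_unit_eq_sup_orthonormal {n d : ℕ} (hdn : d ≤ n)
    (A : (Fin d → Fin n) → ℝ) (hA : IsAntisym A) :
    sSup {x : ℝ | ∃ v : Fin d → Fin n → ℝ,
        (∀ m, ∑ i : Fin n, v m i ^ 2 = 1) ∧ x = |contr A v|} =
    sSup {x : ℝ | ∃ u : Fin d → Fin n → ℝ,
        (∀ p q : Fin d, ∑ i : Fin n, u p i * u q i = if p = q then 1 else 0) ∧
        x = |contr A u|} := by
  refine csSup_eq_csSup_of_forall_exists_le ?_ ?_
  · rintro _ ⟨v, hv, rfl⟩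
    obtain ⟨u, hu, hle⟩ := exists_orthonormal_abs_contr_le hdn hA v hv
    exact ⟨_, ⟨u, hu, rfl⟩, hle⟩
  · rintro _ ⟨u, hu, rfl⟩
    exact ⟨_, ⟨u, fun m => by simpa [sq] using hu m m, rfl⟩, le_rfl⟩
end

section
/- Let A ∈ ℝ^{n×⋯×n} be antisymmetric of order d and U ∈ ℝ^{n×d} have orthonormal columns u_1,…,u_d. Then ‖A ×_1 Uᵀ ×_2 Uᵀ ⋯ ×_d Uᵀ‖ = d! · |A ×_1 u_1ᵀ ⋯ ×_d u_dᵀ| · ‖antisymm(e_1⊗⋯⊗e_d)‖, and ‖antisymm(e_1⊗⋯⊗e_d)‖² = 1/d!, so ‖A ×_1 Uᵀ ⋯ ×_d Uᵀ‖² = d!·(A ×_1 u_1ᵀ ⋯ ×_d u_dᵀ)². -/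
/-- The antisymmetrizer of `e_1 ⊗ ⋯ ⊗ e_d ∈ ℝ^{d×⋯×d}`. -/
noncomputable def antisymmUnit (d : ℕ) : (Fin d → Fin d) → ℝ :=
  fun j => (1 / (Nat.factorial d : ℝ)) *
    ∑ π : Equiv.Perm (Fin d), ((Equiv.Perm.sign π : ℤ) : ℝ) *
      (if (j ∘ π) = (fun m => m) then 1 else 0)

/-!
Contracting every mode of an antisymmetric tensor with one and the same matrix gives again an
antisymmetric tensor. An antisymmetric tensor `T` on `Fin d → Fin d` vanishes at non-injective
indices and satisfies `T σ = sign σ * T id` at permutations, so `∑ j, T j ^ 2 = d! * T id ^ 2`.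
Applied to the compressed tensor `S`, whose value at `id` is `A ×₁ u₁ᵀ ⋯ ×_d u_dᵀ`, and to
`antisymm(e₁ ⊗ ⋯ ⊗ e_d)`, whose value at `id` is `1 / d!`, this gives all three claims.
-/

open Equiv Function Nat

namespace IsAntisym

variable {n d : ℕ} {A : (Fin d → Fin n) → ℝ}

theorem apply_eq_zero_of_not_injective (hA : IsAntisym A) {j : Fin d → Fin n}
    (hj : ¬ Injective j) : A j = 0 := by
  obtain ⟨a, b, hab, hne⟩ := not_injective_iff.mp hj
  have hswap : j ∘ swap a b = j := by
    ext m
    simp only [comp_apply, swap_apply_def]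
    split_ifs <;> simp_all
  have h := hA (swap a b) j
  rw [hswap, Perm.sign_swap hne] at h
  push_cast at h
  linarith

theorem contract (hA : IsAntisym A) {k : ℕ} (U : Matrix (Fin n) (Fin k) ℝ) :
    IsAntisym fun j : Fin d → Fin k => ∑ i : Fin d → Fin n, A i * ∏ m, U (i m) (j m) := by
  intro π j
  change ∑ i, A i * ∏ m, U (i m) (j (π m)) = _
  rw [Finset.mul_sum, ← (π.symm.arrowCongr (Equiv.refl (Fin n))).sum_comp]
  refine Fintype.sum_congr _ _ fun i => ?_
  have hcomp : π.symm.arrowCongr (Equiv.refl (Fin n)) i = i ∘ π := by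
    funext m; simp [Equiv.arrowCongr]
  rw [hcomp, hA π i, comp_def, Equiv.prod_comp π fun m => U (i m) (j m)]
  ring

theorem sum_sq {T : (Fin d → Fin d) → ℝ} (hT : IsAntisym T) :
    ∑ j, T j ^ 2 = d ! * T id ^ 2 := by
  rw [← Fintype.sum_of_injective (fun σ : Perm (Fin d) => ⇑σ) DFunLike.coe_injective
    (fun σ => T σ ^ 2) _ (fun j hj => ?_) fun _ => rfl]
  · have hsign (σ : Perm (Fin d)) : T σ ^ 2 = T id ^ 2 := by
      rw [← id_comp σ, hT σ id]
      rcases Int.units_eq_one_or (Perm.sign σ) with h | h <;> simp [h]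
    simp [hsign, Fintype.card_perm]
  · rw [hT.apply_eq_zero_of_not_injective fun h => hj ⟨.ofBijective j h.bijective_of_finite, rfl⟩]
    simp

end IsAntisym

theorem isAntisym_antisymmUnit (d : ℕ) : IsAntisym (antisymmUnit d) := by
  intro π j
  simp only [antisymmUnit]
  rw [← Equiv.sum_comp (Equiv.mulLeft π⁻¹)]
  simp only [coe_mulLeft, Perm.coe_mul, Perm.sign_mul, Perm.sign_inv, Finset.mul_sum]
  refine Fintype.sum_congr _ _ fun τ => ?_
  simp only [comp_assoc, ← comp_assoc π, Perm.coe_inv, self_comp_symm, id_comp]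
  push_cast
  ring

theorem antisymmUnit_id (d : ℕ) : antisymmUnit d id = 1 / d ! := by
  rw [antisymmUnit, Finset.sum_eq_single 1]
  · have h1 : id ∘ ⇑(1 : Perm (Fin d)) = fun m => m := rfl
    rw [if_pos h1]
    simp
  · intro π _ hπ
    have hne : ¬ (id ∘ ⇑π = fun m => m) := fun h => hπ (Equiv.ext (congrFun h))
    rw [if_neg hne, mul_zero]
  · simp

theorem sum_sq_antisymmUnit (d : ℕ) : ∑ j, antisymmUnit d j ^ 2 = 1 / d ! := by
  rw [(isAntisym_antisymmUnit d).sum_sq, antisymmUnit_id]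
  field_simp

theorem antisym_compressed_norm_general {n d : ℕ}
    (A : (Fin d → Fin n) → ℝ) (hA : IsAntisym A)
    (U : Matrix (Fin n) (Fin d) ℝ)
    (S : (Fin d → Fin d) → ℝ)
    (hS : ∀ j, S j = ∑ i : Fin d → Fin n, A i * ∏ m : Fin d, U (i m) (j m)) :
    Real.sqrt (∑ j : Fin d → Fin d, S j ^ 2) =
      (Nat.factorial d : ℝ) *
        |∑ i : Fin d → Fin n, A i * ∏ m : Fin d, U (i m) m| *
        Real.sqrt (∑ j : Fin d → Fin d, antisymmUnit d j ^ 2) ∧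
    (∑ j : Fin d → Fin d, antisymmUnit d j ^ 2) = 1 / (Nat.factorial d : ℝ) ∧
    (∑ j : Fin d → Fin d, S j ^ 2) =
      (Nat.factorial d : ℝ) *
        (∑ i : Fin d → Fin n, A i * ∏ m : Fin d, U (i m) m) ^ 2 := by
  set c := ∑ i : Fin d → Fin n, A i * ∏ m : Fin d, U (i m) m
  have hS_antisym : IsAntisym S := funext hS ▸ hA.contract U
  have hS_sq : ∑ j, S j ^ 2 = d ! * c ^ 2 := by rw [hS_antisym.sum_sq, hS id]; rfl
  have hε_sq := sum_sq_antisymmUnit d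
  refine ⟨?_, hε_sq, hS_sq⟩
  have hS_sq' : ∑ j, S j ^ 2 = (d ! * c) ^ 2 * ∑ j, antisymmUnit d j ^ 2 := by
    rw [hS_sq, hε_sq]
    field_simp
  rw [hS_sq', Real.sqrt_mul (sq_nonneg _), Real.sqrt_sq_eq_abs, abs_mul, Nat.abs_cast]

/-- For an antisymmetric tensor `A` and `U` with orthonormal columns
`u_1,…,u_d`, the Frobenius norm of the compressed tensor
`S = A ×₁ Uᵀ ⋯ ×_d Uᵀ` satisfies
`‖S‖ = d! · |A ×₁ u₁ᵀ ⋯ ×_d u_dᵀ| · ‖antisymm(e₁⊗⋯⊗e_d)‖`, where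
`‖antisymm(e₁⊗⋯⊗e_d)‖² = 1/d!`, hence
`‖S‖² = d! · (A ×₁ u₁ᵀ ⋯ ×_d u_dᵀ)²`. -/
theorem antisym_compressed_norm {n d : ℕ}
    (A : (Fin d → Fin n) → ℝ) (hA : IsAntisym A)
    (U : Matrix (Fin n) (Fin d) ℝ)
    (hU : ∀ p q : Fin d, ∑ x : Fin n, U x p * U x q = if p = q then 1 else 0)
    (S : (Fin d → Fin d) → ℝ)
    (hS : ∀ j, S j = ∑ i : Fin d → Fin n, A i * ∏ m : Fin d, U (i m) (j m)) :
    Real.sqrt (∑ j : Fin d → Fin d, S j ^ 2) =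
      (Nat.factorial d : ℝ) *
        |∑ i : Fin d → Fin n, A i * ∏ m : Fin d, U (i m) m| *
        Real.sqrt (∑ j : Fin d → Fin d, antisymmUnit d j ^ 2) ∧
    (∑ j : Fin d → Fin d, antisymmUnit d j ^ 2) = 1 / (Nat.factorial d : ℝ) ∧
    (∑ j : Fin d → Fin d, S j ^ 2) =
      (Nat.factorial d : ℝ) *
        (∑ i : Fin d → Fin n, A i * ∏ m : Fin d, U (i m) m) ^ 2 :=
  antisym_compressed_norm_general A hA U S hS
end
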